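/- Suppose x is a positive solution of x'(t) + Σ_i p_i(t) x(τ_i(t)) = 0 on [t₁,∞), with x nonincreasing, and suppose x(t)·a_r(t,s) ≤ x(s) for t ≥ s ≥ t₁. Then integrating the equation from t* to t (for t₁ ≤ h(t) ≤ t* ≤ t) yields ∫_{t*}^t Σ_i p_i(ζ) a_r(h(t), τ_i(ζ)) dζ ≤ x(t*)/x(h(t)). -/

import Mathlib

/-!
Since `x (h t) * a (h t) (τ i ζ) ≤ x (τ i ζ)` and `p i ζ ≥ 0`, the integrand is bounded by
`∑ i, p i ζ * x (τ i ζ) / x (h t) = -x' ζ / x (h t)`, whose integral over `[t*, t]` is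
`(x t* - x t) / x (h t) ≤ x t* / x (h t)`.
-/

open Real Filter intervalIntegral

open Set in
/-- Non-integrable `φ` gets the junk integral `0`, hence the hypothesis `0 ≤ f b - f a`. -/
theorem integral_le_sub_of_hasDerivAt_of_le {f f' φ : ℝ → ℝ} {a b : ℝ} (hab : a ≤ b)
    (hf : ∀ s ∈ Icc a b, HasDerivAt f (f' s) s) (hφ : ∀ s ∈ Ioo a b, φ s ≤ f' s)
    (hfab : 0 ≤ f b - f a) : ∫ s in a..b, φ s ≤ f b - f a := by
  by_cases hint : IntervalIntegrable φ MeasureTheory.volume a b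
  · refine integral_le_sub_of_hasDeriv_right_of_le hab
      (fun s hs => (hf s hs).continuousAt.continuousWithinAt)
      (fun s hs => (hf s (Ioo_subset_Icc_self hs)).hasDerivWithinAt) ?_ hφ
    exact (intervalIntegrable_iff_integrableOn_Icc_of_le hab).mp hint
  · rwa [integral_undef hint]

theorem Finset.sum_mul_le_sum_mul_div_of_mul_le {ι : Type*} (s : Finset ι) {w u v : ι → ℝ}
    {c : ℝ} (hc : 0 < c) (hw : ∀ i ∈ s, 0 ≤ w i) (huv : ∀ i ∈ s, c * u i ≤ v i) :
    ∑ i ∈ s, w i * u i ≤ (∑ i ∈ s, w i * v i) / c := by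
  rw [Finset.sum_div]
  refine Finset.sum_le_sum fun i hi => ?_
  rw [mul_div_assoc]
  exact mul_le_mul_of_nonneg_left ((le_div_iff₀' hc).mpr (huv i hi)) (hw i hi)

theorem stmt11_general (m : ℕ) (p τ : Fin m → ℝ → ℝ)
    (hp : ∀ i t, 0 ≤ t → 0 ≤ p i t)
    (x : ℝ → ℝ) (t₁ : ℝ) (ht₁ : 0 ≤ t₁)
    (hxpos : ∀ t, t₁ ≤ t → 0 < x t)
    (hxanti : AntitoneOn x (Set.Ici t₁))
    (hsol : ∀ t, t₁ ≤ t → HasDerivAt x (-(∑ i, p i t * x (τ i t))) t)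
    (a : ℝ → ℝ → ℝ)
    (ha : ∀ t s, t₁ ≤ s → s ≤ t → x t * a t s ≤ x s)
    (h : ℝ → ℝ) (t tstar : ℝ)
    (h1 : t₁ ≤ h t) (h2 : h t ≤ tstar) (h3 : tstar ≤ t)
    (hτh : ∀ i ζ, tstar ≤ ζ → ζ ≤ t → t₁ ≤ τ i ζ ∧ τ i ζ ≤ h t) :
    ∫ ζ in tstar..t, ∑ i, p i ζ * a (h t) (τ i ζ) ≤ x tstar / x (h t) := by
  have hc : 0 < x (h t) := hxpos _ h1
  have htstar : t₁ ≤ tstar := h1.trans h2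
  have hderiv : ∀ s ∈ Set.Icc tstar t,
      HasDerivAt (fun s => -x s / x (h t)) ((∑ i, p i s * x (τ i s)) / x (h t)) s := by
    intro s hs
    simpa using ((hsol s (htstar.trans hs.1)).neg.div_const (x (h t)))
  have hbound : ∀ ζ ∈ Set.Ioo tstar t,
      ∑ i, p i ζ * a (h t) (τ i ζ) ≤ (∑ i, p i ζ * x (τ i ζ)) / x (h t) := fun ζ hζ =>
    Finset.sum_mul_le_sum_mul_div_of_mul_le _ hc
      (fun i _ => hp i ζ (ht₁.trans (htstar.trans hζ.1.le)))
      (fun i _ => ha _ _ (hτh i ζ hζ.1.le hζ.2.le).1 (hτh i ζ hζ.1.le hζ.2.le).2)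
  have hxt : 0 < x t := hxpos t (htstar.trans h3)
  have hxle : x t ≤ x tstar := hxanti htstar (htstar.trans h3) h3
  calc ∫ ζ in tstar..t, ∑ i, p i ζ * a (h t) (τ i ζ)
      ≤ -x t / x (h t) - -x tstar / x (h t) :=
        integral_le_sub_of_hasDerivAt_of_le h3 hderiv hbound (by
          rw [← sub_div]; exact div_nonneg (by linarith) hc.le)
    _ = (x tstar - x t) / x (h t) := by ring
    _ ≤ x tstar / x (h t) := by gcongr; linarith

/-- If `x` is a positive nonincreasing solution of the delay
equation on `[t₁,∞)` and `x(t)·a_r(t,s) ≤ x(s)` for `t ≥ s ≥ t₁`, then for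
`t₁ ≤ h(t) ≤ t* ≤ t` (with `τᵢ(ζ) ∈ [t₁, h(t)]` for `ζ ∈ [t*, t]`),
integrating the equation from `t*` to `t` yields
`∫_{t*}^t ∑ pᵢ(ζ) a_r(h(t), τᵢ(ζ)) dζ ≤ x(t*)/x(h(t))`. -/
theorem stmt11 (m : ℕ) (hm : 1 ≤ m) (p τ : Fin m → ℝ → ℝ)
    (hp : ∀ i t, 0 ≤ t → 0 ≤ p i t) (hpc : ∀ i, Continuous (p i))
    (hτ : ∀ i t, 0 ≤ t → τ i t < t) (hτc : ∀ i, Continuous (τ i))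
    (x : ℝ → ℝ) (t₁ : ℝ) (ht₁ : 0 ≤ t₁)
    (hxpos : ∀ t, t₁ ≤ t → 0 < x t)
    (hxanti : AntitoneOn x (Set.Ici t₁))
    (hsol : ∀ t, t₁ ≤ t → HasDerivAt x (-(∑ i, p i t * x (τ i t))) t)
    (a : ℝ → ℝ → ℝ)
    (ha : ∀ t s, t₁ ≤ s → s ≤ t → x t * a t s ≤ x s)
    (h : ℝ → ℝ) (t tstar : ℝ)
    (h1 : t₁ ≤ h t) (h2 : h t ≤ tstar) (h3 : tstar ≤ t)
    (hτh : ∀ i ζ, tstar ≤ ζ → ζ ≤ t → t₁ ≤ τ i ζ ∧ τ i ζ ≤ h t) :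
    ∫ ζ in tstar..t, ∑ i, p i ζ * a (h t) (τ i ζ) ≤ x tstar / x (h t) :=
  stmt11_general m p τ hp x t₁ ht₁ hxpos hxanti hsol a ha h t tstar h1 h2 h3 hτh
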